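/- arXiv:1006.0092 — 2 statements merged into one kernel-verified Lean document; each statement's English description precedes it below -/
import Mathlib

section
/- Let A be a commutative ring and 𝔭 a prime ideal of W_n(A) (p-typical Witt vectors) not containing p. Then there exists a unique i ∈ {0,…,n} and a unique prime ideal 𝔮 of A with gh_i^{-1}(𝔮) = 𝔭, and the induced map A_𝔮 → W_n(A)_𝔭 is an isomorphism. -/
/-!
The ghost map `G = (gh_0, …, gh_n) : W_n(A) → A^{n+1}` has kernel and cokernel killed by `p^n`.
Cokernel: if `y` solves the ghost equations at level `m`, then `[p^{m+1} b_0] + V y` solves them at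
level `m + 1`, because the higher ghost components of a Teichmüller lift `[p^{m+1} a]` are divisible
by `p^{m+2}` and `gh_{j+1} ∘ V = p · gh_j`. Kernel: if `gh_0, …, gh_m` vanish on `y`, then
`y = V y'` and induction gives `p^m y ∈ V^{m+1} W(A)`. So `G` becomes an isomorphism after
localizing at a prime `𝔭 ∌ p`: `𝔭` is the pullback of a unique prime of `A^{n+1}`, with the same
local ring, and the primes of `A^{n+1}` are the pullbacks of the primes of `A` along the
projections.
-/

namespace Ideal

theorem mem_iff_of_comap_eq {R S : Type*} [CommRing R] [CommRing S] {f : R →+* S}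
    {𝔭 : Ideal R} {𝔔 : Ideal S} [𝔔.IsPrime] (h𝔔 : 𝔔.comap f = 𝔭) {x t : R} {y : S}
    (ht : t ∉ 𝔭) (hxy : f x = f t * y) : y ∈ 𝔔 ↔ x ∈ 𝔭 := by
  rw [← h𝔔, Ideal.mem_comap, hxy]
  have : f t ∉ 𝔔 := fun h => ht (h𝔔 ▸ h)
  exact ⟨fun hy => 𝔔.mul_mem_left _ hy, fun h => (‹𝔔.IsPrime›.mem_or_mem h).resolve_left this⟩

end Ideal

namespace RingHom

variable {R S : Type*} [CommRing R] [CommRing S]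

/-- `R_𝔭 → S ⊗[R] R_𝔭` is bijective: the kernel and the cokernel of `f` are killed by
elements outside `𝔭`. -/
structure LocallyBijectiveAt (f : R →+* S) (𝔭 : Ideal R) : Prop where
  exists_mul_eq_zero : ∀ x, f x = 0 → ∃ u ∉ 𝔭, u * x = 0
  exists_map_eq_map_mul : ∀ y, ∃ x, ∃ t ∉ 𝔭, f x = f t * y

namespace LocallyBijectiveAt

variable {f : R →+* S} {𝔭 : Ideal R}

theorem mem_iff_of_map_eq [𝔭.IsPrime] (hf : f.LocallyBijectiveAt 𝔭) {a b : R} (hab : f a = f b) :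
    a ∈ 𝔭 ↔ b ∈ 𝔭 := by
  obtain ⟨u, hu, hu0⟩ := hf.exists_mul_eq_zero (a - b) (by rw [map_sub, hab, sub_self])
  have hab𝔭 : a - b ∈ 𝔭 := (‹𝔭.IsPrime›.mem_or_mem (hu0 ▸ 𝔭.zero_mem)).resolve_left hu
  exact ⟨fun ha => by simpa using 𝔭.sub_mem ha hab𝔭, fun hb => by simpa using 𝔭.add_mem hb hab𝔭⟩

theorem comap_map_eq [𝔭.IsPrime] (hf : f.LocallyBijectiveAt 𝔭) : (𝔭.map f).comap f = 𝔭 := by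
  have hmap : ∀ y ∈ 𝔭.map f, ∃ z ∈ 𝔭, ∃ t ∉ 𝔭, f z = f t * y := by
    intro y hy
    induction hy using Submodule.span_induction with
    | mem _ h =>
      obtain ⟨a, ha, rfl⟩ := h
      exact ⟨a, ha, 1, ‹𝔭.IsPrime›.one_notMem, by rw [map_one, one_mul]⟩
    | zero => exact ⟨0, 𝔭.zero_mem, 1, ‹𝔭.IsPrime›.one_notMem, by simp⟩
    | add y₁ y₂ _ _ h₁ h₂ =>
      obtain ⟨z₁, hz₁, t₁, ht₁, h₁⟩ := h₁
      obtain ⟨z₂, hz₂, t₂, ht₂, h₂⟩ := h₂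
      refine ⟨t₂ * z₁ + t₁ * z₂, 𝔭.add_mem (𝔭.mul_mem_left _ hz₁) (𝔭.mul_mem_left _ hz₂),
        t₁ * t₂, ‹𝔭.IsPrime›.mul_notMem ht₁ ht₂, ?_⟩
      simp only [map_add, map_mul, h₁, h₂]
      ring
    | smul c y _ h =>
      obtain ⟨z, hz, t, ht, h⟩ := h
      obtain ⟨w, s, hs, hw⟩ := hf.exists_map_eq_map_mul c
      refine ⟨w * z, 𝔭.mul_mem_left _ hz, s * t, ‹𝔭.IsPrime›.mul_notMem hs ht, ?_⟩
      rw [map_mul, map_mul, hw, h, smul_eq_mul]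
      ring
  refine le_antisymm (fun x hx => ?_) Ideal.le_comap_map
  obtain ⟨z, hz, t, ht, hzt⟩ := hmap (f x) hx
  rw [← map_mul] at hzt
  exact (‹𝔭.IsPrime›.mem_or_mem ((hf.mem_iff_of_map_eq hzt).mp hz)).resolve_left ht

theorem exists_isPrime_comap_eq [𝔭.IsPrime] (hf : f.LocallyBijectiveAt 𝔭) :
    ∃ 𝔔 : Ideal S, 𝔔.IsPrime ∧ 𝔔.comap f = 𝔭 :=
  (Ideal.comap_map_eq_self_iff_of_isPrime 𝔭).mp hf.comap_map_eq

theorem eq_of_comap_eq (hf : f.LocallyBijectiveAt 𝔭) {𝔔₁ 𝔔₂ : Ideal S} [𝔔₁.IsPrime]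
    [𝔔₂.IsPrime] (h₁ : 𝔔₁.comap f = 𝔭) (h₂ : 𝔔₂.comap f = 𝔭) : 𝔔₁ = 𝔔₂ := by
  ext y
  obtain ⟨x, t, ht, hxy⟩ := hf.exists_map_eq_map_mul y
  rw [Ideal.mem_iff_of_comap_eq h₁ ht hxy, Ideal.mem_iff_of_comap_eq h₂ ht hxy]

theorem bijective_localRingHom [𝔭.IsPrime] (hf : f.LocallyBijectiveAt 𝔭) (𝔮 : Ideal S)
    [𝔮.IsPrime] (h : 𝔭 = 𝔮.comap f) :
    Function.Bijective (Localization.localRingHom 𝔭 𝔮 f h) := by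
  subst h
  have hnotMem {x t : R} {c : S} (ht : t ∉ 𝔮.comap f) (hc : c ∉ 𝔮) (hxc : f x = f t * c) :
      x ∉ 𝔮.comap f :=
    fun hx => ‹𝔮.IsPrime›.mul_notMem ht hc (hxc ▸ hx)
  constructor
  · refine (injective_iff_map_eq_zero _).mpr fun a ha => ?_
    obtain ⟨⟨x, s⟩, rfl⟩ := IsLocalization.mk'_surjective (𝔮.comap f).primeCompl a
    rw [Localization.localRingHom_mk', IsLocalization.mk'_eq_zero_iff] at ha
    obtain ⟨⟨c, hc⟩, hcx⟩ := ha
    obtain ⟨x', t, ht, hx'⟩ := hf.exists_map_eq_map_mul c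
    obtain ⟨u, hu, hux⟩ := hf.exists_mul_eq_zero (x' * x) (by
      rw [map_mul, hx', mul_assoc, hcx, mul_zero])
    rw [IsLocalization.mk'_eq_zero_iff]
    exact ⟨⟨u * x', mul_mem hu (hnotMem ht hc hx')⟩, by rw [mul_assoc, hux]⟩
  · intro b
    obtain ⟨⟨y, ⟨c, hc⟩⟩, rfl⟩ := IsLocalization.mk'_surjective 𝔮.primeCompl b
    obtain ⟨x, t, ht, hx⟩ := hf.exists_map_eq_map_mul y
    obtain ⟨x', t', ht', hx'⟩ := hf.exists_map_eq_map_mul c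
    refine ⟨IsLocalization.mk' _ (x * t')
      (⟨t * x', mul_mem ht (hnotMem ht' hc hx')⟩ : (𝔮.comap f).primeCompl), ?_⟩
    rw [Localization.localRingHom_mk', IsLocalization.mk'_eq_iff_eq]
    simp only [map_mul, hx, hx']
    ring

end LocallyBijectiveAt

theorem locallyBijectiveAt_evalRingHom {ι A : Type*} [CommRing A] (i : ι) (𝔮 : Ideal A)
    [𝔮.IsPrime] : (Pi.evalRingHom (fun _ => A) i).LocallyBijectiveAt
      (𝔮.comap (Pi.evalRingHom (fun _ => A) i)) := by
  classical
  refine ⟨fun x hx => ⟨Pi.single i 1, ?_, ?_⟩, fun y => ⟨fun _ => y, 1, ?_, by simp⟩⟩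
  · simpa using ‹𝔮.IsPrime›.one_notMem
  · ext j
    rcases eq_or_ne j i with rfl | hj
    · simpa using hx
    · simp [hj]
  · simpa using ‹𝔮.IsPrime›.one_notMem

namespace LocallyBijectiveAt

variable {R A ι : Type*} [CommRing R] [CommRing A] {f : R →+* (ι → A)} {𝔭 : Ideal R} [𝔭.IsPrime]

theorem existsUnique_comap_evalRingHom_comp [_root_.Finite ι] (hf : f.LocallyBijectiveAt 𝔭) :
    ∃! iq : ι × {q : Ideal A // q.IsPrime},
      Ideal.comap ((Pi.evalRingHom (fun _ => A) iq.1).comp f) iq.2.1 = 𝔭 := by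
  obtain ⟨𝔔, h𝔔, hf𝔔⟩ := hf.exists_isPrime_comap_eq
  obtain ⟨i, q, hq⟩ := PrimeSpectrum.exists_comap_evalRingHom_eq ⟨𝔔, h𝔔⟩
  have hq𝔔 : q.asIdeal.comap (Pi.evalRingHom (fun _ => A) i) = 𝔔 :=
    congrArg PrimeSpectrum.asIdeal hq
  refine ⟨⟨i, q.asIdeal, q.isPrime⟩, by rw [← hf𝔔, ← hq𝔔]; rfl, ?_⟩
  rintro ⟨j, q', hq'⟩ hj
  have hq'𝔔 : q'.comap (Pi.evalRingHom (fun _ => A) j) = 𝔔 := hf.eq_of_comap_eq hj hf𝔔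
  obtain ⟨rfl, hqq'⟩ := Sigma.mk.inj_iff.mp <| PrimeSpectrum.sigmaToPi_injective (fun _ => A)
    (a₁ := ⟨j, ⟨q', hq'⟩⟩) (a₂ := ⟨i, q⟩) (PrimeSpectrum.ext (hq'𝔔.trans hq𝔔.symm))
  cases eq_of_heq hqq'
  rfl

theorem bijective_localRingHom_evalRingHom_comp (hf : f.LocallyBijectiveAt 𝔭) (i : ι)
    (𝔮 : Ideal A) [𝔮.IsPrime] (h : 𝔭 = 𝔮.comap ((Pi.evalRingHom (fun _ => A) i).comp f)) :
    Function.Bijective (Localization.localRingHom 𝔭 𝔮 _ h) := by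
  rw [Localization.localRingHom_comp 𝔭 (𝔮.comap (Pi.evalRingHom (fun _ => A) i)) 𝔮 f h _ rfl]
  exact ((locallyBijectiveAt_evalRingHom i 𝔮).bijective_localRingHom 𝔮 rfl).comp
    (hf.bijective_localRingHom _ (h.trans (Ideal.comap_comap f _).symm))

end LocallyBijectiveAt

end RingHom

namespace WittVector

variable {p : ℕ} [hp : Fact p.Prime] {R : Type*} [CommRing R]

theorem ghostComponent_zero_eq_coeff (x : WittVector p R) : ghostComponent 0 x = x.coeff 0 := by
  rw [ghostComponent_apply, wittPolynomial_zero, MvPolynomial.aeval_X]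

theorem exists_ghostComponent_eq_pow_mul (m : ℕ) (b : ℕ → R) :
    ∃ x : WittVector p R, ∀ j ≤ m, ghostComponent j x = (p : R) ^ m * b j := by
  induction m generalizing b with
  | zero =>
    refine ⟨teichmuller p (b 0), fun j hj => ?_⟩
    obtain rfl : j = 0 := Nat.le_zero.mp hj
    simp
  | succ m ih =>
    have hdvd (j : ℕ) : (p : R) ^ (m + 2) ∣ ((p : R) ^ (m + 1) * b 0) ^ p ^ (j + 1) := by
      have h2 : 2 ≤ p ^ (j + 1) := hp.out.two_le.trans (Nat.le_self_pow (by omega) p)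
      rw [mul_pow]
      refine Dvd.dvd.mul_right ((pow_dvd_pow _ (by omega : m + 2 ≤ (m + 1) * 2)).trans ?_) _
      rw [pow_mul]
      exact pow_dvd_pow _ h2
    choose d hd using hdvd
    obtain ⟨y, hy⟩ := ih fun j => b (j + 1) - p * d j
    refine ⟨teichmuller p ((p : R) ^ (m + 1) * b 0) + verschiebung y, fun j hj => ?_⟩
    rcases j with _ | j
    · rw [map_add, ghostComponent_zero_eq_coeff (verschiebung y), verschiebung_coeff_zero,
        ghostComponent_teichmuller]
      ring
    · rw [map_add, ghostComponent_verschiebung, ghostComponent_teichmuller, hd, hy j (by omega)]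
      ring

theorem eq_verschiebung_shift_of_ghostComponent_zero {y : WittVector p R}
    (hy : ghostComponent 0 y = 0) : y = verschiebung (y.shift 1) :=
  eq_iterate_verschiebung (n := 1) fun i hi => by
    rwa [Nat.lt_one_iff.mp hi, ← ghostComponent_zero_eq_coeff]

theorem exists_pow_mul_eq_iterate_verschiebung {m : ℕ} {y : WittVector p R}
    (hy : ∀ j ≤ m, ghostComponent j y = 0) :
    ∃ z, (p : WittVector p R) ^ m * y = verschiebung^[m + 1] z := by
  induction m generalizing y with
  | zero =>
    exact ⟨y.shift 1, by simpa using eq_verschiebung_shift_of_ghostComponent_zero (hy 0 le_rfl)⟩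
  | succ m ih =>
    have hyV := eq_verschiebung_shift_of_ghostComponent_zero (hy 0 (Nat.zero_le _))
    obtain ⟨w, hw⟩ := ih (y := (p : WittVector p R) * y.shift 1) (fun j hj => by
      rw [map_mul, map_natCast, ← ghostComponent_verschiebung, ← hyV, hy (j + 1) (by omega)])
    refine ⟨w, ?_⟩
    rw [Function.iterate_succ_apply', ← hw, ← mul_assoc, ← pow_succ, ← Nat.cast_pow,
      ← nsmul_eq_mul, ← nsmul_eq_mul, map_nsmul, ← hyV]

end WittVector

namespace TruncatedWittVector

variable {p : ℕ} [Fact p.Prime] {n : ℕ} {A : Type*} [CommRing A]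
  {g : Fin (n + 1) → TruncatedWittVector p (n + 1) A →+* A}

theorem pow_mul_eq_zero_of_ghostMap_eq_zero
    (hg : ∀ (i : Fin (n + 1)) (x : WittVector p A),
      g i (WittVector.truncate (n + 1) x) = WittVector.ghostComponent (i : ℕ) x)
    {x : TruncatedWittVector p (n + 1) A} (hx : RingHom.pi g x = 0) :
    (p : TruncatedWittVector p (n + 1) A) ^ n * x = 0 := by
  obtain ⟨y, rfl⟩ := WittVector.truncate_surjective p (n + 1) A x
  obtain ⟨z, hz⟩ := WittVector.exists_pow_mul_eq_iterate_verschiebung (m := n) (y := y)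
    fun j hj => by simpa [hg] using congr_fun hx ⟨j, by omega⟩
  rw [← map_natCast (WittVector.truncate (n + 1)), ← map_pow, ← map_mul, hz, ← RingHom.mem_ker,
    WittVector.mem_ker_truncate]
  exact fun i hi => WittVector.iterate_verschiebung_coeff_eq_zero z hi

open Fin.NatCast in
theorem exists_ghostMap_eq_pow_mul
    (hg : ∀ (i : Fin (n + 1)) (x : WittVector p A),
      g i (WittVector.truncate (n + 1) x) = WittVector.ghostComponent (i : ℕ) x)
    (b : Fin (n + 1) → A) :
    ∃ x, RingHom.pi g x = (p : Fin (n + 1) → A) ^ n * b := by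
  obtain ⟨y, hy⟩ := WittVector.exists_ghostComponent_eq_pow_mul (p := p) n fun j => b j
  refine ⟨WittVector.truncate (n + 1) y, funext fun i => ?_⟩
  simpa [hg] using hy i (Nat.lt_succ_iff.mp i.isLt)

theorem locallyBijectiveAt_ghostMap
    (hg : ∀ (i : Fin (n + 1)) (x : WittVector p A),
      g i (WittVector.truncate (n + 1) x) = WittVector.ghostComponent (i : ℕ) x)
    (𝔭 : Ideal (TruncatedWittVector p (n + 1) A)) [𝔭.IsPrime]
    (hp𝔭 : (p : TruncatedWittVector p (n + 1) A) ∉ 𝔭) :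
    (RingHom.pi g).LocallyBijectiveAt 𝔭 := by
  have hpn : (p : TruncatedWittVector p (n + 1) A) ^ n ∉ 𝔭 :=
    fun h => hp𝔭 (‹𝔭.IsPrime›.mem_of_pow_mem n h)
  refine ⟨fun x hx => ⟨_, hpn, pow_mul_eq_zero_of_ghostMap_eq_zero hg hx⟩, fun y => ?_⟩
  obtain ⟨x, hx⟩ := exists_ghostMap_eq_pow_mul hg y
  exact ⟨x, _, hpn, by rw [hx, map_pow, map_natCast]⟩

end TruncatedWittVector

/-- Let `A` be a commutative ring and `𝔭` a prime ideal of `W_n(A)`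
(`p`-typical Witt vectors, normalized indexing, so `W_n = TruncatedWittVector p (n+1)`)
not containing `p`. Then there exist a unique `i ∈ {0,…,n}` and a unique prime ideal `𝔮`
of `A` with `gh_i⁻¹(𝔮) = 𝔭`, and the induced map between the localizations `A_𝔮` and
`W_n(A)_𝔭` is an isomorphism. The ghost maps `gh_i` are characterized via the truncation
map by the ghost components of `W(A)`. -/
theorem localization_of_witt_at_prime_not_containing_p (p : ℕ) [Fact p.Prime] (n : ℕ)
    (A : Type) [CommRing A]
    (g : Fin (n + 1) → (TruncatedWittVector p (n + 1) A →+* A))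
    (hg : ∀ (i : Fin (n + 1)) (x : WittVector p A),
      g i (WittVector.truncate (n + 1) x) = WittVector.ghostComponent (i : ℕ) x)
    (𝔭 : Ideal (TruncatedWittVector p (n + 1) A)) [𝔭.IsPrime]
    (hp𝔭 : (p : TruncatedWittVector p (n + 1) A) ∉ 𝔭) :
    (∃! iq : Fin (n + 1) × { q : Ideal A // q.IsPrime },
      Ideal.comap (g iq.1) iq.2.1 = 𝔭) ∧
    ∀ (i : Fin (n + 1)) (𝔮 : Ideal A) [𝔮.IsPrime] (h : 𝔭 = Ideal.comap (g i) 𝔮),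
      Function.Bijective (Localization.localRingHom 𝔭 𝔮 (g i) h) := by
  have hG := TruncatedWittVector.locallyBijectiveAt_ghostMap hg 𝔭 hp𝔭
  exact ⟨hG.existsUnique_comap_evalRingHom_comp,
    fun i 𝔮 _ h => hG.bijective_localRingHom_evalRingHom_comp i 𝔮 h⟩
end

section
/- Let A be a commutative ring and 𝔭 a prime ideal of W_n(A) containing p. Then there is a unique prime ideal 𝔮 of A with gh_0^{-1}(𝔮) = 𝔭, and the canonical W_n(A)-algebra map W_n(A)_𝔭 → W_n(A_𝔮) is an isomorphism. -/
/-!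
Write `S = W_n(A)`. An element of `ker gh₀` is `V y`, and `(V y)² = p · V(y²)`; so when `p ∈ 𝔭` the
kernel of the surjection `gh₀ : S → A` lies in `𝔭`, and the primes of `A` correspond bijectively
to the primes of `S` containing it.

For the localization, the Teichmüller formula `[t] · x = (t^(p^i) xᵢ)ᵢ` shows that `W_n(A_𝔮)`
is the localization of `S` at the Teichmüller representatives `[s]`, `s ∉ 𝔮`: clear the
denominators of all coefficients at once, and kill a vector with a common annihilator of its
coefficients. Every element of `S ∖ 𝔭` already becomes a unit in `W_n(A_𝔮)`: its zeroth coefficient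
is a unit of `A_𝔮` and `p` lies in the maximal ideal of `A_𝔮`, and then units lift along the
truncations `W_(k+1) → W_k`, whose kernels `V^k[a]` multiply as `p^k V^k[ab]`. Hence the
localization at the smaller submonoid is also the localization at `S ∖ 𝔭`.
-/

open Function

namespace WittVector

variable {p : ℕ} [Fact p.Prime]

theorem ghostComponent_mk {R : Type*} [CommRing R] (f : ℕ → R) (k : ℕ) :
    ghostComponent k (mk p f) = ∑ i ∈ Finset.range (k + 1), (p : R) ^ i * f i ^ p ^ (k - i) := by
  rw [ghostComponent_apply]
  exact aeval_wittPolynomial p ℤ f k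

theorem map_mk {R S : Type*} [CommRing R] [CommRing S] (g : R →+* S) (f : ℕ → R) :
    map g (mk p f) = mk p (g ∘ f) := by
  ext i
  rw [map_coeff, coeff_mk, coeff_mk, comp_apply]

theorem teichmuller_mul_eq_mk_of_invertible {R : Type*} [CommRing R] [Invertible (p : R)]
    (t : R) (x : WittVector p R) :
    teichmuller p t * x = mk p fun i => t ^ p ^ i * x.coeff i := by
  refine (ghostMap.bijective_of_invertible p R).1 (funext fun k => ?_)
  rw [map_mul, Pi.mul_apply, ghostMap_apply, ghostMap_apply, ghostMap_apply]
  change ghostComponent k (teichmuller p t) * ghostComponent k (mk p x.coeff) = _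
  rw [ghostComponent_teichmuller, ghostComponent_mk, ghostComponent_mk, Finset.mul_sum]
  refine Finset.sum_congr rfl fun i hi => ?_
  rw [mul_pow, ← pow_mul, ← pow_add, Nat.add_sub_cancel' (Finset.mem_range_succ_iff.mp hi)]
  ring

theorem teichmuller_X_mul_eq_mk :
    teichmuller p (MvPolynomial.X none) * mk p (fun i => MvPolynomial.X (some i)) =
      mk p fun i =>
        (MvPolynomial.X none : MvPolynomial (Option ℕ) ℤ) ^ p ^ i * MvPolynomial.X (some i) := by
  refine map_injective (MvPolynomial.map (Int.castRingHom ℚ))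
    (MvPolynomial.map_injective _ Int.cast_injective) ?_
  rw [map_mul, map_teichmuller, map_mk, map_mk, teichmuller_mul_eq_mk_of_invertible]
  simp [comp_def]

theorem teichmuller_mul_eq_mk {R : Type*} [CommRing R] (t : R) (x : WittVector p R) :
    teichmuller p t * x = mk p fun i => t ^ p ^ i * x.coeff i := by
  let φ := MvPolynomial.aeval (R := ℤ) fun o : Option ℕ => o.elim t x.coeff
  have h := congrArg (map φ.toRingHom) (teichmuller_X_mul_eq_mk (p := p))
  simp only [map_mul, map_teichmuller, map_mk, comp_def, AlgHom.toRingHom_eq_coe, RingHom.coe_coe,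
    MvPolynomial.aeval_X, Option.elim_none, Option.elim_some, map_pow, φ] at h
  exact h

theorem teichmuller_mul_coeff {R : Type*} [CommRing R] (t : R) (x : WittVector p R) (k : ℕ) :
    (teichmuller p t * x).coeff k = t ^ p ^ k * x.coeff k := by
  rw [teichmuller_mul_eq_mk, coeff_mk]

section Verschiebung

variable {R : Type*} [CommRing R]

theorem verschiebung_mul_verschiebung (x y : WittVector p R) :
    verschiebung x * verschiebung y = p • verschiebung (x * y) := by
  rw [← verschiebung_mul_frobenius, frobenius_verschiebung, ← map_nsmul, nsmul_eq_mul,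
    mul_comm (p : WittVector p R), mul_assoc]

theorem iterate_verschiebung_mul_iterate_verschiebung (k : ℕ) (x y : WittVector p R) :
    verschiebung^[k] x * verschiebung^[k] y = p ^ k • verschiebung^[k] (x * y) := by
  induction k generalizing x y with
  | zero => simp
  | succ k ih =>
    rw [iterate_succ_apply', iterate_succ_apply', verschiebung_mul_verschiebung, ih, map_nsmul,
      iterate_succ_apply', smul_smul, pow_succ']

theorem truncate_iterate_verschiebung_congr (k : ℕ) {x y : WittVector p R}
    (h : x.coeff 0 = y.coeff 0) :
    truncate (k + 1) (verschiebung^[k] x) = truncate (k + 1) (verschiebung^[k] y) := by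
  ext i
  rw [coeff_truncate, coeff_truncate]
  obtain hi | hi := lt_or_eq_of_le (Nat.lt_succ_iff.mp i.isLt)
  · rw [iterate_verschiebung_coeff_eq_zero _ hi, iterate_verschiebung_coeff_eq_zero _ hi]
  · have hx := iterate_verschiebung_coeff x k 0
    have hy := iterate_verschiebung_coeff y k 0
    rw [zero_add] at hx hy
    rw [hi, hx, hy, h]

theorem isUnit_one_add_truncate_iterate_verschiebung (hp : (p : R) ∈ Ideal.jacobson ⊥) (k : ℕ)
    (w : WittVector p R) :
    IsUnit (1 + truncate (k + 2) (verschiebung^[k + 1] w)) := by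
  set a := w.coeff 0
  obtain ⟨u, hu⟩ := Ideal.mem_jacobson_bot.mp hp (p ^ k * a)
  -- `b` makes `a + b + p^(k+1) a b` vanish, the only coefficient of the product that survives
  set b := -(a * ↑u⁻¹)
  have hb : a + b + p ^ (k + 1) * (a * b) = 0 := by
    have : (p : R) * (p ^ k * a) + 1 = 1 + p ^ (k + 1) * a := by ring
    rw [this] at hu
    linear_combination (a * ↑u⁻¹) * hu - a * u.inv_mul
  have hcoeff : (w + teichmuller p b + p ^ (k + 1) • (w * teichmuller p b)).coeff 0 =
      (0 : WittVector p R).coeff 0 := by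
    simp only [← constantCoeff_apply, map_add, map_nsmul, map_mul, map_zero]
    simp only [constantCoeff_apply, teichmuller_coeff_zero, nsmul_eq_mul, Nat.cast_pow]
    exact hb
  refine IsUnit.of_mul_eq_one (1 + truncate (k + 2) (verschiebung^[k + 1] (teichmuller p b))) ?_
  calc (1 + truncate (k + 2) (verschiebung^[k + 1] w)) *
        (1 + truncate (k + 2) (verschiebung^[k + 1] (teichmuller p b)))
      = 1 + truncate (k + 2) (verschiebung^[k + 1]
          (w + teichmuller p b + p ^ (k + 1) • (w * teichmuller p b))) := by
        rw [iterate_map_add, iterate_map_add, iterate_map_nsmul,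
          ← iterate_verschiebung_mul_iterate_verschiebung, map_add, map_add, map_mul]
        ring
    _ = 1 := by
        rw [truncate_iterate_verschiebung_congr _ hcoeff, iterate_map_zero, map_zero, add_zero]

theorem isUnit_truncate_of_isUnit_coeff_zero (hp : (p : R) ∈ Ideal.jacobson ⊥)
    {x : WittVector p R} (hx : IsUnit (x.coeff 0)) (n : ℕ) : IsUnit (truncate (n + 1) x) := by
  induction n with
  | zero =>
    obtain ⟨b, hb⟩ := isUnit_iff_exists_inv.mp hx
    refine IsUnit.of_mul_eq_one (truncate 1 (teichmuller p b)) ?_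
    ext i
    rw [Fin.fin_one_eq_zero i, ← map_mul, coeff_truncate, ← map_one (truncate 1), coeff_truncate]
    simpa [mul_coeff_zero, teichmuller_coeff_zero] using hb
  | succ n ih =>
    obtain ⟨y', hy'⟩ := isUnit_iff_exists_inv.mp ih
    obtain ⟨y, rfl⟩ := truncate_surjective p (n + 1) R y'
    have hz : ∀ i < n + 1, (x * y - 1).coeff i = 0 := by
      rw [← mem_ker_truncate, RingHom.mem_ker, map_sub, map_mul, hy', map_one, sub_self]
    have hxy : truncate (n + 2) (x * y) =
        1 + truncate (n + 2) (verschiebung^[n + 1] ((x * y - 1).shift (n + 1))) := by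
      rw [← eq_iterate_verschiebung hz, map_sub, map_one, add_sub_cancel]
    rw [map_mul] at hxy
    exact isUnit_of_mul_isUnit_left (hxy ▸ isUnit_one_add_truncate_iterate_verschiebung hp n _)

theorem mem_of_coeff_zero_eq_zero {n : ℕ} {I : Ideal (TruncatedWittVector p n R)} [I.IsPrime]
    (hp : (p : TruncatedWittVector p n R) ∈ I) {x : WittVector p R} (hx : x.coeff 0 = 0) :
    truncate n x ∈ I := by
  have hV : x = verschiebung (x.shift 1) :=
    eq_iterate_verschiebung (n := 1) fun i hi => by rwa [Nat.lt_one_iff.mp hi]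
  refine ‹I.IsPrime›.mem_of_pow_mem 2 ?_
  rw [← map_pow, pow_two, hV, verschiebung_mul_verschiebung, map_nsmul, nsmul_eq_mul]
  exact I.mul_mem_right _ hp

end Verschiebung

end WittVector

namespace TruncatedWittVector

open WittVector

variable {p : ℕ} [Fact p.Prime]

theorem isUnit_of_isUnit_coeff_zero {R : Type*} [CommRing R] (hp : (p : R) ∈ Ideal.jacobson ⊥)
    {n : ℕ} {x : TruncatedWittVector p (n + 1) R} (hx : IsUnit (x.coeff 0)) : IsUnit x := by
  obtain ⟨x, rfl⟩ := WittVector.truncate_surjective p (n + 1) R x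
  exact isUnit_truncate_of_isUnit_coeff_zero hp hx n

theorem coeff_truncate_teichmuller_mul {R : Type*} [CommRing R] {n : ℕ} (t : R)
    (x : TruncatedWittVector p n R) (i : Fin n) :
    (WittVector.truncate n (teichmuller p t) * x).coeff i = t ^ p ^ (i : ℕ) * x.coeff i := by
  obtain ⟨x, rfl⟩ := WittVector.truncate_surjective p n R x
  rw [← map_mul, WittVector.coeff_truncate, WittVector.coeff_truncate, teichmuller_mul_coeff]

section Localization

variable {A B : Type*} [CommRing A] [CommRing B] [Algebra A B] {n : ℕ}
  [Algebra (TruncatedWittVector p n A) (TruncatedWittVector p n B)]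

theorem coeff_algebraMap (hf : ∀ x : WittVector p A, algebraMap _ _ (WittVector.truncate n x) =
      WittVector.truncate n (WittVector.map (algebraMap A B) x))
    (x : TruncatedWittVector p n A) (i : Fin n) :
    (algebraMap _ (TruncatedWittVector p n B) x).coeff i = algebraMap A B (x.coeff i) := by
  obtain ⟨x, rfl⟩ := WittVector.truncate_surjective p n A x
  rw [hf, WittVector.coeff_truncate, WittVector.coeff_truncate, map_coeff]

variable (p) in
noncomputable def teichmullerSubmonoid (n : ℕ) (N : Submonoid A) :
    Submonoid (TruncatedWittVector p n A) :=
  N.map ((WittVector.truncate n : WittVector p A →+* _).toMonoidHom.comp (teichmuller p))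

theorem isLocalization_teichmuller (N : Submonoid A) [IsLocalization N B]
    (hf : ∀ x : WittVector p A, algebraMap _ _ (WittVector.truncate n x) =
      WittVector.truncate n (WittVector.map (algebraMap A B) x)) :
    IsLocalization (teichmullerSubmonoid p n N) (TruncatedWittVector p n B) where
  map_units := by
    rintro ⟨_, s, hs, rfl⟩
    change IsUnit (algebraMap _ _ (WittVector.truncate n (teichmuller p s)))
    rw [hf, map_teichmuller]
    exact ((IsLocalization.map_units B ⟨s, hs⟩).map (teichmuller p)).map (WittVector.truncate n)
  surj w := by
    obtain ⟨⟨b, hb⟩, hint⟩ := IsLocalization.exist_integer_multiples N Finset.univ w.coeff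
    choose a ha using fun i => hint i (Finset.mem_univ i)
    refine ⟨⟨mk p fun i => b ^ (p ^ (i : ℕ) - 1) * a i, _, Submonoid.mem_map_of_mem _ hb⟩, ?_⟩
    ext i
    simp only [MonoidHom.coe_comp, comp_apply, RingHom.toMonoidHom_eq_coe, MonoidHom.coe_coe]
    rw [mul_comm, hf, map_teichmuller, coeff_truncate_teichmuller_mul, coeff_algebraMap hf,
      coeff_mk, map_mul, map_pow, ha i, Algebra.smul_def, ← mul_assoc,
      pow_sub_one_mul (pow_ne_zero _ (Fact.out : p.Prime).ne_zero)]
  exists_of_eq {x y} h := by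
    have hzero : ∀ i, algebraMap A B ((x - y).coeff i) = 0 := fun i => by
      rw [← coeff_algebraMap hf, map_sub, h, sub_self, coeff_zero]
    choose t ht using fun i => (IsLocalization.map_eq_zero_iff N B _).mp (hzero i)
    let T : A := ∏ i, (t i : A)
    refine ⟨⟨_, Submonoid.mem_map_of_mem _ (N.prod_mem fun i _ => (t i).2 : T ∈ N)⟩, ?_⟩
    simp only [MonoidHom.coe_comp, comp_apply, RingHom.toMonoidHom_eq_coe, MonoidHom.coe_coe]
    rw [← sub_eq_zero, ← mul_sub]
    ext i
    rw [coeff_truncate_teichmuller_mul, coeff_zero]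
    obtain ⟨c, hc⟩ : (t i : A) ∣ T ^ p ^ (i : ℕ) :=
      (Finset.dvd_prod_of_mem _ (Finset.mem_univ i)).trans
        (dvd_pow_self _ (pow_ne_zero _ (Fact.out : p.Prime).ne_zero))
    rw [hc, mul_right_comm, ht i, zero_mul]

end Localization

theorem isLocalization_atPrime {A : Type*} [CommRing A] (𝔮 : Ideal A) [𝔮.IsPrime]
    (hp : (p : A) ∈ 𝔮) {n : ℕ}
    [Algebra (TruncatedWittVector p (n + 1) A)
      (TruncatedWittVector p (n + 1) (Localization.AtPrime 𝔮))]
    (hf : ∀ x : WittVector p A, algebraMap _ _ (WittVector.truncate (n + 1) x) =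
      WittVector.truncate (n + 1) (WittVector.map (algebraMap A (Localization.AtPrime 𝔮)) x))
    {P : Ideal (TruncatedWittVector p (n + 1) A)} [P.IsPrime] (hP : ∀ x, x ∈ P ↔ x.coeff 0 ∈ 𝔮) :
    IsLocalization P.primeCompl (TruncatedWittVector p (n + 1) (Localization.AtPrime 𝔮)) := by
  have := isLocalization_teichmuller 𝔮.primeCompl hf
  have hp' : (p : Localization.AtPrime 𝔮) ∈ Ideal.jacobson ⊥ := by
    refine IsLocalRing.maximalIdeal_le_jacobson ⊥ ?_
    rw [← map_natCast (algebraMap A _)]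
    exact (IsLocalization.AtPrime.to_map_mem_maximal_iff _ 𝔮 _).mpr hp
  refine IsLocalization.of_le (teichmullerSubmonoid p (n + 1) 𝔮.primeCompl) _ ?_
    fun x hx => isUnit_of_isUnit_coeff_zero hp' ?_
  · rintro _ ⟨s, hs, rfl⟩
    show WittVector.truncate (n + 1) (teichmuller p s) ∈ P.primeCompl
    rwa [Ideal.mem_primeCompl_iff, hP, WittVector.coeff_truncate, Fin.val_zero,
      teichmuller_coeff_zero]
  · rw [coeff_algebraMap hf]
    exact IsLocalization.map_units _ (⟨x.coeff 0, fun h => hx ((hP x).mpr h)⟩ : 𝔮.primeCompl)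

end TruncatedWittVector

theorem IsLocalization.existsUnique_ringHom_comp_and_bijective {R S T : Type*} [CommRing R]
    [CommRing S] [CommRing T] [Algebra R S] [Algebra R T] (M : Submonoid R)
    [IsLocalization M S] [IsLocalization M T] :
    (∃! F : S →+* T, F.comp (algebraMap R S) = algebraMap R T) ∧
      ∀ F : S →+* T, F.comp (algebraMap R S) = algebraMap R T → Bijective F := by
  have hcomm : (algEquiv M S T).toRingHom.comp (algebraMap R S) = algebraMap R T :=
    RingHom.ext (algEquiv M S T).commutes
  have huniq (F : S →+* T) (hF : F.comp (algebraMap R S) = algebraMap R T) :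
      F = (algEquiv M S T).toRingHom :=
    ringHom_ext M (hF.trans hcomm.symm)
  exact ⟨⟨_, hcomm, huniq⟩, fun F hF => huniq F hF ▸ (algEquiv M S T).bijective⟩

theorem Ideal.existsUnique_isPrime_comap_eq_of_surjective {R S : Type*} [CommRing R]
    [CommRing S] {f : R →+* S} (hf : Surjective f) {P : Ideal R} [P.IsPrime]
    (hP : RingHom.ker f ≤ P) :
    ∃! Q : { Q : Ideal S // Q.IsPrime }, Q.1.comap f = P := by
  refine ⟨⟨P.map f, map_isPrime_of_surjective hf hP⟩, ?_, ?_⟩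
  · change comap f (map f P) = P
    rw [comap_map_of_surjective' f hf, sup_eq_left.mpr hP]
  · rintro ⟨Q, hQ⟩ rfl
    exact Subtype.ext (map_comap_of_surjective f hf Q).symm

/-- Let `A` be a commutative ring and `𝔭` a prime ideal of `W_n(A)`
containing `p` (`p`-typical Witt vectors, normalized indexing:
`W_n = TruncatedWittVector p (n+1)`). Then there is a unique prime ideal `𝔮` of `A` with
`gh_0⁻¹(𝔮) = 𝔭`, and the canonical `W_n(A)`-algebra map `W_n(A)_𝔭 → W_n(A_𝔮)` is an
isomorphism. Here `gh_0` is characterized via the truncation map by the zeroth ghost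
component, `W_n(A) → W_n(A_𝔮)` is the functorial map induced by `A → A_𝔮` (characterized
via truncation by `WittVector.map`), and the `W_n(A)`-algebra structure on the localization
is the canonical one. -/
theorem localization_of_witt_at_prime_containing_p (p : ℕ) [Fact p.Prime] (n : ℕ)
    (A : Type) [CommRing A]
    (g0 : TruncatedWittVector p (n + 1) A →+* A)
    (hg0 : ∀ x : WittVector p A,
      g0 (WittVector.truncate (n + 1) x) = WittVector.ghostComponent 0 x)
    (𝔭 : Ideal (TruncatedWittVector p (n + 1) A)) [𝔭.IsPrime]
    (hp𝔭 : (p : TruncatedWittVector p (n + 1) A) ∈ 𝔭) :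
    (∃! q : { q : Ideal A // q.IsPrime }, Ideal.comap g0 q.1 = 𝔭) ∧
    ∀ (𝔮 : Ideal A) [𝔮.IsPrime], 𝔭 = Ideal.comap g0 𝔮 →
      ∀ mapT : TruncatedWittVector p (n + 1) A →+*
          TruncatedWittVector p (n + 1) (Localization.AtPrime 𝔮),
        (∀ x : WittVector p A, mapT (WittVector.truncate (n + 1) x) =
          WittVector.truncate (n + 1)
            (WittVector.map (algebraMap A (Localization.AtPrime 𝔮)) x)) →
        (∃! F : Localization.AtPrime 𝔭 →+*
            TruncatedWittVector p (n + 1) (Localization.AtPrime 𝔮),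
          F.comp (algebraMap (TruncatedWittVector p (n + 1) A) (Localization.AtPrime 𝔭)) =
            mapT) ∧
        ∀ F : Localization.AtPrime 𝔭 →+*
            TruncatedWittVector p (n + 1) (Localization.AtPrime 𝔮),
          F.comp (algebraMap (TruncatedWittVector p (n + 1) A) (Localization.AtPrime 𝔭)) =
            mapT → Function.Bijective F := by
  have hg0_eq (x : TruncatedWittVector p (n + 1) A) : g0 x = x.coeff 0 := by
    obtain ⟨x, rfl⟩ := WittVector.truncate_surjective p (n + 1) A x
    simp [hg0, WittVector.ghostComponent_apply]
  have hsurj : Surjective g0 := fun a =>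
    ⟨WittVector.truncate (n + 1) (WittVector.teichmuller p a),
      by simp [hg0_eq, WittVector.teichmuller_coeff_zero]⟩
  have hker : RingHom.ker g0 ≤ 𝔭 := fun x hx => by
    obtain ⟨x, rfl⟩ := WittVector.truncate_surjective p (n + 1) A x
    rw [RingHom.mem_ker, hg0_eq, WittVector.coeff_truncate] at hx
    exact WittVector.mem_of_coeff_zero_eq_zero hp𝔭 hx
  refine ⟨Ideal.existsUnique_isPrime_comap_eq_of_surjective hsurj hker, ?_⟩
  rintro 𝔮 _ rfl mapT hmapT
  let := mapT.toAlgebra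
  have hp𝔮 : (p : A) ∈ 𝔮 := by simpa using hp𝔭
  have := TruncatedWittVector.isLocalization_atPrime 𝔮 hp𝔮 hmapT (P := Ideal.comap g0 𝔮)
    fun x => by rw [Ideal.mem_comap, hg0_eq]
  exact IsLocalization.existsUnique_ringHom_comp_and_bijective (Ideal.comap g0 𝔮).primeCompl
end
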